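/- Let L ⊂ (Σ, λ) be Legendrian and suppose the Reeb flow η has no closed orbits. Let b, s: S¹ → ℝ parametrize a smooth embedded curve E ⊂ ℝ² (in the (s,b)-plane). Then F₀: L × S¹ → (ℝ × Σ) × (ℝ × Σ), F₀(σ, t') = ((0, σ), (b(t'), η_{s(t')}(σ))), satisfies F₀*(e^{a₁}λ₁ − e^{a₂}λ₂) = −e^{b(t')} s'(t') dt'. In particular F₀ is isotropic for the symplectic form d(e^{a₁}λ₁) ⊖ d(e^{a₂}λ₂), and for a loop C homotopic to a loop contained in a fiber L × {t'₀}, the integral ∫_C F₀*(e^{a₂}λ₂) = 0, while for C homotopic to {σ₀} × S¹ traversed n times, ∫_C F₀*(e^{a₂}λ₂) = n · area(E). -/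
import Mathlib


/-- Let `L ⊂ (Σ, λ)` be a Legendrian submanifold (parametrized by an
immersion `ι : P → F`, with `Σ` modelled on the normed space `F`), let `η` be the Reeb
flow (no closed-orbit hypothesis is needed for the identities below; it enters only to
make `F₀` an embedding), and let `b, s : S¹ → ℝ` (1-periodic functions) parametrize a
smooth curve `E` in the `(s,b)`-plane.  Consider
`F₀ : L × S¹ → (ℝ × Σ) × (ℝ × Σ)`, `F₀(σ, t') = ((0, σ), (b(t'), η_{s(t')}(σ)))`.
Then `F₀*(e^{a₁}λ₁ − e^{a₂}λ₂) = −e^{b(t')} s'(t') dt'`: on a tangent vector `(w, τ)`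
its value is `−e^{b(t')}·s'(t')·τ` (in particular `F₀` is isotropic for
`d(e^{a₁}λ₁) ⊖ d(e^{a₂}λ₂)`).  Moreover, for a loop `C` contained in a fiber
`L × {t'₀}` the integral `∫_C F₀*(e^{a₂}λ₂) = 0`, while over `{σ₀} × S¹` traversed
`n` times, `∫_C F₀*(e^{a₂}λ₂) = n · area(E)`, with `area(E) = ∮ e^{b} ds`. -/
theorem stmt15 (F P : Type*)
    [NormedAddCommGroup F] [NormedSpace ℝ F]
    [NormedAddCommGroup P] [NormedSpace ℝ P]
    (lam : F → (F →L[ℝ] ℝ)) (η : ℝ → F → F) (X : F → F)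
    (Dη : ℝ → F → (F →L[ℝ] F))
    (hDη : ∀ t x, HasFDerivAt (η t) (Dη t x) x)
    (hflow : ∀ t x, HasDerivAt (fun r => η r x) (X (η t x)) t)
    (hinv : ∀ t x v, lam (η t x) (Dη t x v) = lam x v)
    (hReeb : ∀ x, lam x (X x) = 1)
    (ι : P → F) (Dι : P → (P →L[ℝ] F))
    (hι : ∀ p, HasFDerivAt ι (Dι p) p)
    (hLeg : ∀ p w, lam (ι p) (Dι p w) = 0)
    (b s : ℝ → ℝ) (hb : ContDiff ℝ 1 b) (hs : ContDiff ℝ 1 s)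
    (hbper : Function.Periodic b 1) (hsper : Function.Periodic s 1) :
    -- pullback identity  F₀*(e^{a₁}λ₁ − e^{a₂}λ₂) = −e^{b} s' dt'
    (∀ (p : P) (t' : ℝ) (w : P) (τ : ℝ),
      Real.exp 0 * lam (ι p) (Dι p w)
        - Real.exp (b t') * lam (η (s t') (ι p))
            (Dη (s t') (ι p) (Dι p w) + (deriv s t' * τ) • X (η (s t') (ι p)))
        = -(Real.exp (b t') * deriv s t' * τ)) ∧
    -- ∫_C F₀*(e^{a₂}λ₂) = 0  for loops C in a fiber L × {t'₀}
    (∀ (γ : ℝ → P) (_ : ContDiff ℝ 1 γ) (_ : Function.Periodic γ 1) (t'₀ : ℝ),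
      (∫ t in (0:ℝ)..1,
        Real.exp (b t'₀) * lam (η (s t'₀) (ι (γ t)))
          (Dη (s t'₀) (ι (γ t)) (Dι (γ t) (deriv γ t)))) = 0) ∧
    -- ∫_C F₀*(e^{a₂}λ₂) = n · area(E)  for C = {σ₀} × S¹ traversed n times
    (∀ (σ₀ : P) (n : ℕ),
      (∫ t in (0:ℝ)..(n : ℝ),
        Real.exp (b t) * lam (η (s t) (ι σ₀))
          ((deriv s t) • X (η (s t) (ι σ₀))))
        = n * (∫ t in (0:ℝ)..1, Real.exp (b t) * deriv s t)) := by
  refine ⟨?_, ?_, ?_⟩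
  · intro p t' w τ
    simp [map_add, map_smul, hLeg, hinv, hReeb, smul_eq_mul]
    ring
  · intro γ _ _ t'₀
    have : ∀ t : ℝ, Real.exp (b t'₀) * lam (η (s t'₀) (ι (γ t)))
        (Dη (s t'₀) (ι (γ t)) (Dι (γ t) (deriv γ t))) = 0 := fun t => by
      rw [hinv, hLeg, mul_zero]
    simp only [this, intervalIntegral.integral_zero]
  · intro σ₀ n
    have hf : ∀ t : ℝ, Real.exp (b t) * lam (η (s t) (ι σ₀))
        ((deriv s t) • X (η (s t) (ι σ₀))) = Real.exp (b t) * deriv s t := fun t => by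
      rw [map_smul, smul_eq_mul, hReeb, mul_one]
    simp only [hf]
    set f : ℝ → ℝ := fun t => Real.exp (b t) * deriv s t with hfdef
    have hds : ∀ t : ℝ, deriv s (t + 1) = deriv s t := fun t => by
      rw [← deriv_comp_add_const s 1]
      congr 1
      funext x
      exact hsper x
    have hper : Function.Periodic f 1 := fun t => by
      simp only [hfdef, hbper t, hds t]
    have hcont : Continuous f := by
      exact ((Real.continuous_exp.comp hb.continuous).mul
        (hs.continuous_deriv le_rfl))
    have hint : ∀ t₁ t₂, IntervalIntegrable f MeasureTheory.volume t₁ t₂ := fun t₁ t₂ =>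
      hcont.intervalIntegrable t₁ t₂
    have := hper.intervalIntegral_add_zsmul_eq (n : ℤ) 0 hint
    simpa [smul_eq_mul, mul_one] using this
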